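/- arXiv:1403.1991 — 2 statements merged into one kernel-verified Lean document; each statement's English description precedes it below -/
import Mathlib

section
/- For every δ > 0, every finite graph G with n vertices, every stationary distribution μ of the noisy voter model on G with noise parameter δ, every initial configuration η ∈ {0,1}^{V(G)} and every t ≥ 0, the total variation distance to stationarity satisfies ‖P_t(η,·) − μ‖ ≤ n·exp(−(2δ/(2δ+1))·t). -/
open Finset

/-- Total variation distance between two (probability) measures on a finite set:
the maximum over all events `A` of `|μ₁(A) - μ₂(A)|`. -/
noncomputable def tvDist {S : Type*} [Fintype S] (μ ν : S → ℝ) : ℝ :=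
  Finset.univ.powerset.sup' (Finset.powerset_nonempty _) fun A =>
    |∑ s ∈ A, μ s - ∑ s ∈ A, ν s|

/-- Flip rate of the noisy voter model with noise `δ` at vertex `x` in configuration `η`. -/
noncomputable def nvRate {V : Type*} [Fintype V] (G : SimpleGraph V) [DecidableRel G.Adj]
    (δ : ℝ) (x : V) (η : V → Bool) : ℝ :=
  (1 / (2 * δ + 1)) *
    ((1 / (G.degree x : ℝ)) * ((Finset.univ.filter fun y => G.Adj x y ∧ η y ≠ η x).card : ℝ) + δ)

/-- The rate matrix of the noisy voter model: single-spin flips occur at rate `nvRate`,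
transitions changing two or more spins have rate `0`, and diagonal entries make rows sum to `0`. -/
noncomputable def nvQ {V : Type*} [Fintype V] [DecidableEq V] (G : SimpleGraph V)
    [DecidableRel G.Adj] (δ : ℝ) : Matrix (V → Bool) (V → Bool) ℝ := fun η η' =>
  if η = η' then -∑ x, nvRate G δ x η
  else if (Finset.univ.filter fun v => η v ≠ η' v).card = 1 then
    ∑ x ∈ Finset.univ.filter (fun v => η v ≠ η' v), nvRate G δ x η
  else 0

/-!
Run two copies of the dynamics, one from `η` and one from `μ`, under the basic coupling: at a site
where the copies agree, both flip together at the smaller of their two rates. By the coupling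
inequality the total variation distance is at most the expected number of disagreeing sites. If
the copies disagree at `k` neighbours of `x`, a disagreement at `x` is repaired at rate at least
`1 - k / ((2δ+1) d(x))` and an agreement at `x` is broken at rate at most `k / ((2δ+1) d(x))`,
so the vector of disagreement probabilities is dominated by the semigroup of a random walk on `G`
killed at rate `2δ/(2δ+1)`. Its total mass is at most `n` at time `0` and decays like
`exp(-(2δ/(2δ+1)) t)`.

Everything is phrased through matrix exponentials: the coupling is a generator on pairs that the
two coordinate projections intertwine with `nvQ`, and the domination is the comparison principle
`exp(tA) P ≤ P exp(tN)` for matrices `A`, `N` with nonnegative off-diagonal entries and `AP ≤ PN`.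
-/

open Matrix NormedSpace

namespace Matrix

theorem mul_apply_le_mul_apply_of_nonneg_left {l m n : Type*} [Fintype m] {X : Matrix l m ℝ}
    {Y Y' : Matrix m n ℝ} (hX : ∀ i j, 0 ≤ X i j) (h : ∀ i j, Y i j ≤ Y' i j) (i : l) (j : n) :
    (X * Y) i j ≤ (X * Y') i j :=
  sum_le_sum fun k _ => mul_le_mul_of_nonneg_left (h k j) (hX i k)

theorem mul_apply_le_mul_apply_of_nonneg_right {l m n : Type*} [Fintype m] {Y Y' : Matrix l m ℝ}
    {X : Matrix m n ℝ} (hX : ∀ i j, 0 ≤ X i j) (h : ∀ i j, Y i j ≤ Y' i j) (i : l) (j : n) :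
    (Y * X) i j ≤ (Y' * X) i j :=
  sum_le_sum fun k _ => mul_le_mul_of_nonneg_right (h i k) (hX k j)

variable {ι κ : Type*} [Fintype ι] [DecidableEq ι] [Fintype κ] [DecidableEq κ]

theorem hasSum_linearMap_exp {E : Type*} [AddCommGroup E] [Module ℝ E] [TopologicalSpace E]
    [IsTopologicalAddGroup E] [ContinuousSMul ℝ E] [T2Space E]
    (L : Matrix ι ι ℝ →ₗ[ℝ] E) (A : Matrix ι ι ℝ) :
    HasSum (fun n => (n.factorial : ℝ)⁻¹ • L (A ^ n)) (L (exp A)) := by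
  -- Any matrix norm yields summability, and `L` is continuous for the product topology.
  let : NormedRing (Matrix ι ι ℝ) := Matrix.linftyOpNormedRing
  let : NormedAlgebra ℝ (Matrix ι ι ℝ) := Matrix.linftyOpNormedAlgebra
  have h := (exp_series_hasSum_exp' (𝕂 := ℝ) A).map L L.continuous_of_finiteDimensional
  simp only [Function.comp_def, map_smul] at h
  exact h

theorem exp_mul_eq_mul_exp_of_mul_eq {A : Matrix ι ι ℝ} {B : Matrix κ κ ℝ} {P : Matrix ι κ ℝ}
    (h : A * P = P * B) : exp A * P = P * exp B := by
  have hpow (n : ℕ) : A ^ n * P = P * B ^ n := by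
    induction n with
    | zero => simp
    | succ n ih => rw [pow_succ', Matrix.mul_assoc, ih, ← Matrix.mul_assoc, h, Matrix.mul_assoc,
        ← pow_succ']
  refine (hasSum_linearMap_exp (mulRightLinearMap ι ℝ P) A).unique ?_
  simpa only [mulRightLinearMap_apply, mulLeftLinearMap_apply, hpow] using
    hasSum_linearMap_exp (mulLeftLinearMap κ ℝ P) B

theorem vecMul_exp_of_vecMul_eq_smul {A : Matrix ι ι ℝ} {v : ι → ℝ} {c : ℝ}
    (h : v ᵥ* A = c • v) : v ᵥ* exp A = Real.exp c • v := by
  have hpow (n : ℕ) : v ᵥ* (A ^ n) = c ^ n • v := by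
    induction n with
    | zero => simp
    | succ n ih => rw [pow_succ, ← vecMul_vecMul, ih, smul_vecMul, h, smul_smul, pow_succ]
  let L : Matrix ι ι ℝ →ₗ[ℝ] ι → ℝ :=
    { toFun := (v ᵥ* ·), map_add' := fun B C => vecMul_add B C v,
      map_smul' := fun c B => vecMul_smul v c B }
  have hexp : HasSum (fun n => (n.factorial : ℝ)⁻¹ • c ^ n) (Real.exp c) := by
    rw [Real.exp_eq_exp_ℝ]; exact exp_series_hasSum_exp' c
  refine (hasSum_linearMap_exp L A).unique ?_
  simpa [L, hpow, smul_smul] using hexp.smul_const v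

theorem pow_mul_apply_le_mul_pow_apply {B : Matrix ι ι ℝ} {M : Matrix κ κ ℝ} {P : Matrix ι κ ℝ}
    (hB : ∀ i j, 0 ≤ B i j) (hM : ∀ i j, 0 ≤ M i j) (h : ∀ i j, (B * P) i j ≤ (P * M) i j)
    (n : ℕ) (i : ι) (j : κ) : (B ^ n * P) i j ≤ (P * M ^ n) i j := by
  induction n generalizing i j with
  | zero => simp
  | succ n ih =>
    calc (B ^ (n + 1) * P) i j = (B ^ n * (B * P)) i j := by rw [pow_succ, Matrix.mul_assoc]
      _ ≤ (B ^ n * (P * M)) i j :=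
        mul_apply_le_mul_apply_of_nonneg_left (pow_apply_nonneg hB n) h i j
      _ = (B ^ n * P * M) i j := by rw [Matrix.mul_assoc]
      _ ≤ (P * M ^ n * M) i j := mul_apply_le_mul_apply_of_nonneg_right hM ih i j
      _ = (P * M ^ (n + 1)) i j := by rw [Matrix.mul_assoc, ← pow_succ]

theorem exp_apply_nonneg_of_nonneg {B : Matrix ι ι ℝ} (hB : ∀ i j, 0 ≤ B i j) (i j : ι) :
    0 ≤ exp B i j :=
  (hasSum_linearMap_exp (entryLinearMap ℝ ℝ i j) B).nonneg fun n =>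
    smul_nonneg (by positivity) (pow_apply_nonneg hB n i j)

theorem exp_mul_apply_le_mul_exp_apply_of_nonneg {B : Matrix ι ι ℝ} {M : Matrix κ κ ℝ}
    {P : Matrix ι κ ℝ} (hB : ∀ i j, 0 ≤ B i j) (hM : ∀ i j, 0 ≤ M i j)
    (h : ∀ i j, (B * P) i j ≤ (P * M) i j) (i : ι) (j : κ) :
    (exp B * P) i j ≤ (P * exp M) i j :=
  hasSum_le (fun n => smul_le_smul_of_nonneg_left (pow_mul_apply_le_mul_pow_apply hB hM h n i j)
      (by positivity))
    (hasSum_linearMap_exp (entryLinearMap ℝ ℝ i j ∘ₗ mulRightLinearMap ι ℝ P) B)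
    (hasSum_linearMap_exp (entryLinearMap ℝ ℝ i j ∘ₗ mulLeftLinearMap κ ℝ P) M)

theorem exp_add_smul_one (A : Matrix ι ι ℝ) (c : ℝ) :
    exp (A + c • 1) = Real.exp c • exp A := by
  rw [Matrix.exp_add_of_commute _ _ ((Commute.one_right A).smul_right c), smul_one_eq_diagonal,
    exp_diagonal, Pi.exp_def, ← Real.exp_eq_exp_ℝ, ← smul_one_eq_diagonal, Matrix.mul_smul,
    Matrix.mul_one]

theorem exists_add_smul_one_nonneg {A : Matrix ι ι ℝ} (hA : ∀ i j, i ≠ j → 0 ≤ A i j) :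
    ∃ c₀ : ℝ, ∀ c ≥ c₀, ∀ i j, 0 ≤ (A + c • 1) i j := by
  obtain ⟨c₀, hc₀⟩ := Finite.exists_le fun i => -A i i
  refine ⟨c₀, fun c hc i j => ?_⟩
  by_cases hij : i = j
  · subst hij
    simpa using (by linarith [hc₀ i] : 0 ≤ A i i + c)
  · simpa [one_apply_ne hij] using hA i j hij

theorem exp_smul_apply_nonneg {A : Matrix ι ι ℝ} (hA : ∀ i j, i ≠ j → 0 ≤ A i j) {t : ℝ}
    (ht : 0 ≤ t) (i j : ι) : 0 ≤ exp (t • A) i j := by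
  obtain ⟨c, hc⟩ := exists_add_smul_one_nonneg hA
  have := exp_apply_nonneg_of_nonneg (B := t • (A + c • 1))
    (fun i j => smul_nonneg ht (hc c le_rfl i j)) i j
  rw [smul_add, smul_smul, exp_add_smul_one, smul_apply, smul_eq_mul] at this
  exact nonneg_of_mul_nonneg_right this (Real.exp_pos _)

theorem exp_smul_mul_apply_le_mul_exp_smul_apply {A : Matrix ι ι ℝ} {N : Matrix κ κ ℝ}
    {P : Matrix ι κ ℝ} (hA : ∀ i j, i ≠ j → 0 ≤ A i j) (hN : ∀ i j, i ≠ j → 0 ≤ N i j)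
    (h : ∀ i j, (A * P) i j ≤ (P * N) i j) {t : ℝ} (ht : 0 ≤ t) (i : ι) (j : κ) :
    (exp (t • A) * P) i j ≤ (P * exp (t • N)) i j := by
  -- Shifting `A` and `N` by the same multiple of `1` makes them entrywise nonnegative and only
  -- rescales both exponentials by the same positive factor.
  obtain ⟨a, ha⟩ := exists_add_smul_one_nonneg hA
  obtain ⟨b, hb⟩ := exists_add_smul_one_nonneg hN
  set c := max a b
  have hshift (i j) :
      ((A + c • (1 : Matrix ι ι ℝ)) * P) i j ≤ (P * (N + c • (1 : Matrix κ κ ℝ))) i j := by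
    simpa [Matrix.add_mul, Matrix.mul_add] using h i j
  have := exp_mul_apply_le_mul_exp_apply_of_nonneg (B := t • (A + c • 1)) (M := t • (N + c • 1))
    (P := P) (fun i j => smul_nonneg ht (ha c (le_max_left a b) i j))
    (fun i j => smul_nonneg ht (hb c (le_max_right a b) i j))
    (fun i j => by
      rw [Matrix.smul_mul, Matrix.mul_smul, smul_apply, smul_apply]
      exact mul_le_mul_of_nonneg_left (hshift i j) ht) i j
  rwa [smul_add, smul_smul, exp_add_smul_one, smul_add, smul_smul, exp_add_smul_one,
    Matrix.smul_mul, Matrix.mul_smul, smul_apply, smul_apply, smul_eq_mul, smul_eq_mul,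
    mul_le_mul_iff_of_pos_left (Real.exp_pos _)] at this

end Matrix

section Coupling

def fstMatrix (α β : Type*) [DecidableEq α] : Matrix (α × β) α ℝ :=
  fun p a => if p.1 = a then 1 else 0

def sndMatrix (α β : Type*) [DecidableEq β] : Matrix (α × β) β ℝ :=
  fun p b => if p.2 = b then 1 else 0

variable {α β γ : Type*}

theorem fstMatrix_mul_apply [Fintype α] [DecidableEq α] (M : Matrix α γ ℝ) (p : α × β) (c : γ) :
    (fstMatrix α β * M : Matrix (α × β) γ ℝ) p c = M p.1 c := by
  simp [fstMatrix, Matrix.mul_apply]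

theorem sndMatrix_mul_apply [Fintype β] [DecidableEq β] (M : Matrix β γ ℝ) (p : α × β) (c : γ) :
    (sndMatrix α β * M : Matrix (α × β) γ ℝ) p c = M p.2 c := by
  simp [sndMatrix, Matrix.mul_apply]

theorem sum_vecMul_fstMatrix [Fintype α] [DecidableEq α] [Fintype β] (π : α × β → ℝ)
    (A : Finset α) :
    ∑ a ∈ A, (π ᵥ* fstMatrix α β) a = ∑ p, π p * if p.1 ∈ A then 1 else 0 := by
  simp only [vecMul_apply_eq_sum, fstMatrix, mul_ite, mul_one, mul_zero]
  rw [Finset.sum_comm]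
  exact sum_congr rfl fun p _ => sum_ite_eq A p.1 _

theorem sum_vecMul_sndMatrix [Fintype α] [Fintype β] [DecidableEq β] (π : α × β → ℝ)
    (B : Finset β) :
    ∑ b ∈ B, (π ᵥ* sndMatrix α β) b = ∑ p, π p * if p.2 ∈ B then 1 else 0 := by
  simp only [vecMul_apply_eq_sum, sndMatrix, mul_ite, mul_one, mul_zero]
  rw [Finset.sum_comm]
  exact sum_congr rfl fun p _ => sum_ite_eq B p.2 _

theorem prod_vecMul_fstMatrix [Fintype α] [DecidableEq α] [Fintype β] (u : α → ℝ) (v : β → ℝ) :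
    (fun p : α × β => u p.1 * v p.2) ᵥ* fstMatrix α β = (∑ b, v b) • u := by
  ext a
  simp [vecMul_apply_eq_sum, fstMatrix, Fintype.sum_prod_type, ← mul_sum, mul_comm]

theorem prod_vecMul_sndMatrix [Fintype α] [Fintype β] [DecidableEq β] (u : α → ℝ) (v : β → ℝ) :
    (fun p : α × β => u p.1 * v p.2) ᵥ* sndMatrix α β = (∑ a, u a) • v := by
  ext b
  simp [vecMul_apply_eq_sum, sndMatrix, Fintype.sum_prod_type, ← sum_mul]

theorem tvDist_vecMul_fstMatrix_sndMatrix_le {S : Type*} [Fintype S] [DecidableEq S]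
    {π : S × S → ℝ} (hπ : 0 ≤ π) :
    tvDist (π ᵥ* fstMatrix S S) (π ᵥ* sndMatrix S S) ≤ ∑ p, π p * if p.1 = p.2 then 0 else 1 := by
  refine sup'_le _ _ fun A _ => ?_
  rw [sum_vecMul_fstMatrix, sum_vecMul_sndMatrix, ← sum_sub_distrib]
  refine (abs_sum_le_sum_abs _ _).trans (sum_le_sum fun p _ => ?_)
  rw [← mul_sub, abs_mul, abs_of_nonneg (hπ p)]
  refine mul_le_mul_of_nonneg_left ?_ (hπ p)
  by_cases h : p.1 = p.2
  · simp [h]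
  · rw [if_neg h]; split_ifs <;> norm_num

theorem sum_vecMul_exp_smul_le {V : Type*} [Fintype V] [DecidableEq V] {N : Matrix V V ℝ}
    {c t : ℝ} (hN : ∀ x y, x ≠ y → 0 ≤ N x y) (hcol : 1 ᵥ* N = (-c) • 1) (ht : 0 ≤ t)
    {w : V → ℝ} (hw : w ≤ 1) :
    ∑ x, (w ᵥ* exp (t • N)) x ≤ Fintype.card V * Real.exp (-c * t) := by
  have hexp : 1 ᵥ* exp (t • N) = Real.exp (-c * t) • 1 := by
    refine vecMul_exp_of_vecMul_eq_smul ?_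
    rw [vecMul_smul, hcol, smul_smul, mul_comm]
  calc ∑ x, (w ᵥ* exp (t • N)) x
      ≤ ∑ x, (1 ᵥ* exp (t • N)) x := sum_le_sum fun x _ =>
        dotProduct_le_dotProduct_of_nonneg_right hw fun y => exp_smul_apply_nonneg hN ht y x
    _ = Fintype.card V * Real.exp (-c * t) := by simp [hexp]

theorem tvDist_vecMul_exp_smul_le_of_coupling {S V : Type*} [Fintype S] [DecidableEq S]
    [Fintype V] [DecidableEq V] {Q : Matrix S S ℝ} {C : Matrix (S × S) (S × S) ℝ}
    {D : Matrix (S × S) V ℝ} {N : Matrix V V ℝ} {c t : ℝ}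
    (hC : ∀ p q, p ≠ q → 0 ≤ C p q) (hN : ∀ x y, x ≠ y → 0 ≤ N x y)
    (hfst : C * fstMatrix S S = fstMatrix S S * Q) (hsnd : C * sndMatrix S S = sndMatrix S S * Q)
    (hD : ∀ p : S × S, (if p.1 = p.2 then 0 else 1) ≤ ∑ x, D p x) (hD₁ : ∀ p x, D p x ≤ 1)
    (hCD : ∀ p x, (C * D) p x ≤ (D * N) p x) (hcol : 1 ᵥ* N = (-c) • 1)
    {π : S × S → ℝ} (hπ : 0 ≤ π) (hπ₁ : ∑ p, π p = 1) (ht : 0 ≤ t) :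
    tvDist ((π ᵥ* fstMatrix S S) ᵥ* exp (t • Q)) ((π ᵥ* sndMatrix S S) ᵥ* exp (t • Q)) ≤
      Fintype.card V * Real.exp (-c * t) := by
  set E := exp (t • C)
  have hπE : 0 ≤ π ᵥ* E := fun q =>
    dotProduct_nonneg_of_nonneg hπ fun p => exp_smul_apply_nonneg hC ht p q
  have hmarg {P : Matrix (S × S) S ℝ} (h : C * P = P * Q) :
      (π ᵥ* P) ᵥ* exp (t • Q) = (π ᵥ* E) ᵥ* P := by
    rw [vecMul_vecMul, vecMul_vecMul, exp_mul_eq_mul_exp_of_mul_eq]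
    rw [Matrix.smul_mul, h, Matrix.mul_smul]
  rw [hmarg hfst, hmarg hsnd]
  calc _ ≤ ∑ p, (π ᵥ* E) p * if p.1 = p.2 then 0 else 1 :=
        tvDist_vecMul_fstMatrix_sndMatrix_le hπE
    _ ≤ ∑ p, (π ᵥ* E) p * ∑ x, D p x :=
        sum_le_sum fun p _ => mul_le_mul_of_nonneg_left (hD p) (hπE p)
    _ = ∑ x, (π ᵥ* (E * D)) x := by
        rw [← vecMul_vecMul]; simp only [vecMul_apply_eq_sum, mul_sum]; exact Finset.sum_comm
    _ ≤ ∑ x, (π ᵥ* (D * exp (t • N))) x := sum_le_sum fun x _ =>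
        dotProduct_le_dotProduct_of_nonneg_left
          (fun p => exp_smul_mul_apply_le_mul_exp_smul_apply hC hN hCD ht p x) hπ
    _ = ∑ x, ((π ᵥ* D) ᵥ* exp (t • N)) x := by rw [vecMul_vecMul]
    _ ≤ Fintype.card V * Real.exp (-c * t) := sum_vecMul_exp_smul_le hN hcol ht fun y =>
        (dotProduct_le_dotProduct_of_nonneg_left (fun p => hD₁ p y) hπ).trans_eq
          (by simp [dotProduct, hπ₁])

end Coupling

def disagreement (V : Type*) : Matrix ((V → Bool) × (V → Bool)) V ℝ :=
  fun p x => if p.1 x = p.2 x then 0 else 1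

theorem disagreement_le_one {V : Type*} (p : (V → Bool) × (V → Bool)) (x : V) :
    disagreement V p x ≤ 1 := by
  unfold disagreement; split_ifs <;> norm_num

theorem ite_le_sum_disagreement {V : Type*} [Fintype V] (p : (V → Bool) × (V → Bool)) :
    (if p.1 = p.2 then 0 else 1) ≤ ∑ x, disagreement V p x := by
  have hnonneg (x : V) : 0 ≤ disagreement V p x := by unfold disagreement; split_ifs <;> norm_num
  split_ifs with h
  · exact sum_nonneg fun x _ => hnonneg x
  · obtain ⟨x, hx⟩ := Function.ne_iff.mp h
    calc (1 : ℝ) = disagreement V p x := by simp [disagreement, hx]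
      _ ≤ ∑ x, disagreement V p x := single_le_sum (fun x _ => hnonneg x) (mem_univ x)

theorem abs_sub_sum_ne_le_sum_ne {V : Type*} (s : Finset V) {σ τ : V → Bool} {x : V}
    (h : σ x = τ x) :
    |(∑ y ∈ s, if σ y = σ x then (0 : ℝ) else 1) - ∑ y ∈ s, if τ y = τ x then 0 else 1| ≤
      ∑ y ∈ s, if σ y = τ y then 0 else 1 := by
  rw [← sum_sub_distrib]
  refine (abs_sum_le_sum_abs _ _).trans (sum_le_sum fun y _ => ?_)
  rw [h]; cases σ y <;> cases τ y <;> cases τ x <;> simp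

theorem card_le_sum_ne_add_sum_ne_add_sum_ne {V : Type*} (s : Finset V) {σ τ : V → Bool} {x : V}
    (h : σ x ≠ τ x) :
    (s.card : ℝ) ≤ (∑ y ∈ s, if σ y = σ x then (0 : ℝ) else 1)
      + (∑ y ∈ s, if τ y = τ x then 0 else 1) + ∑ y ∈ s, if σ y = τ y then 0 else 1 := by
  rw [← sum_add_distrib, ← sum_add_distrib, card_eq_sum_ones, Nat.cast_sum, Nat.cast_one]
  refine sum_le_sum fun y _ => ?_
  cases hσ : σ x <;> cases hτ : τ x <;> cases σ y <;> cases τ y <;> simp_all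

section SpinFlips

variable {S T : Type*} [DecidableEq S]

def jumpGen (f : S → S) (r : S → ℝ) : Matrix S S ℝ :=
  fun a b => r a * ((if f a = b then 1 else 0) - if a = b then 1 else 0)

theorem jumpGen_mul_apply [Fintype S] (f : S → S) (r : S → ℝ) (M : Matrix S T ℝ) (a : S) (b : T) :
    (jumpGen f r * M : Matrix S T ℝ) a b = r a * (M (f a) b - M a b) := by
  simp [jumpGen, Matrix.mul_apply, mul_sub, sub_mul, sum_sub_distrib]

theorem jumpGen_apply_nonneg {f : S → S} {r : S → ℝ} {a b : S} (hr : 0 ≤ r a) (hab : a ≠ b) :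
    0 ≤ jumpGen f r a b := by
  unfold jumpGen; rw [if_neg hab, sub_zero]; exact mul_nonneg hr (by split_ifs <;> norm_num)

variable {V : Type*} [DecidableEq V]

def flipAt (x : V) (σ : V → Bool) : V → Bool := Function.update σ x (!σ x)

theorem flipAt_apply_self (x : V) (σ : V → Bool) : flipAt x σ x = !σ x := by simp [flipAt]

theorem flipAt_apply_of_ne {x y : V} (σ : V → Bool) (h : y ≠ x) : flipAt x σ y = σ y := by
  simp [flipAt, h]

theorem flipAt_ne (x : V) (σ : V → Bool) : flipAt x σ ≠ σ :=
  fun h => by simpa [flipAt_apply_self] using congrFun h x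

variable [Fintype V]

theorem flipAt_eq_iff {x : V} {σ τ : V → Bool} :
    flipAt x σ = τ ↔ univ.filter (fun v => σ v ≠ τ v) = {x} := by
  simp only [funext_iff, Finset.ext_iff, mem_filter, mem_univ, true_and, mem_singleton]
  refine forall_congr' fun v => ?_
  by_cases hv : v = x
  · subst hv; cases hσ : σ v <;> cases hτ : τ v <;> simp [flipAt_apply_self, hσ]
  · rw [flipAt_apply_of_ne σ hv]; simp [hv]

def flipGen (r : V → (V → Bool) → ℝ) : Matrix (V → Bool) (V → Bool) ℝ :=
  ∑ x, jumpGen (flipAt x) (r x)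

theorem flipGen_apply (r : V → (V → Bool) → ℝ) (σ τ : V → Bool) :
    flipGen r σ τ =
      ∑ x, r x σ * ((if flipAt x σ = τ then 1 else 0) - if σ = τ then 1 else 0) := by
  simp [flipGen, Matrix.sum_apply, jumpGen]

def syncRate (r : V → (V → Bool) → ℝ) (x : V) (p : (V → Bool) × (V → Bool)) : ℝ :=
  if p.1 x = p.2 x then min (r x p.1) (r x p.2) else 0

/-- The basic coupling of two copies of `flipGen r`: where the copies agree at `x` they flip it
together at rate `syncRate r x`, and each copy flips `x` alone at its remaining rate. -/
def flipCoupling (r : V → (V → Bool) → ℝ) :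
    Matrix ((V → Bool) × (V → Bool)) ((V → Bool) × (V → Bool)) ℝ :=
  ∑ x, (jumpGen (Prod.map (flipAt x) (flipAt x)) (syncRate r x)
    + jumpGen (Prod.map (flipAt x) id) (fun p => r x p.1 - syncRate r x p)
    + jumpGen (Prod.map id (flipAt x)) (fun p => r x p.2 - syncRate r x p))

theorem flipCoupling_mul_apply (r : V → (V → Bool) → ℝ)
    (M : Matrix ((V → Bool) × (V → Bool)) T ℝ) (p : (V → Bool) × (V → Bool)) (b : T) :
    (flipCoupling r * M : Matrix _ T ℝ) p b = ∑ x,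
      (syncRate r x p * (M (flipAt x p.1, flipAt x p.2) b - M p b)
        + (r x p.1 - syncRate r x p) * (M (flipAt x p.1, p.2) b - M p b)
        + (r x p.2 - syncRate r x p) * (M (p.1, flipAt x p.2) b - M p b)) := by
  simp only [flipCoupling, Matrix.sum_mul, Matrix.sum_apply, Matrix.add_mul, Matrix.add_apply,
    jumpGen_mul_apply, Prod.map, id]

theorem flipCoupling_apply_nonneg {r : V → (V → Bool) → ℝ} (hr : ∀ x σ, 0 ≤ r x σ)
    (p q : (V → Bool) × (V → Bool)) (hpq : p ≠ q) : 0 ≤ flipCoupling r p q := by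
  simp only [flipCoupling, Matrix.sum_apply, Matrix.add_apply]
  refine sum_nonneg fun x _ => add_nonneg (add_nonneg ?_ ?_) ?_ <;>
    refine jumpGen_apply_nonneg ?_ hpq <;> unfold syncRate <;> split_ifs <;> simp [hr]

theorem flipCoupling_mul_fstMatrix (r : V → (V → Bool) → ℝ) :
    flipCoupling r * fstMatrix (V → Bool) (V → Bool) =
      fstMatrix (V → Bool) (V → Bool) * flipGen r := by
  refine Matrix.ext fun p τ => ?_
  rw [flipCoupling_mul_apply, fstMatrix_mul_apply, flipGen_apply]
  refine sum_congr rfl fun x _ => ?_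
  simp only [fstMatrix]
  ring

theorem flipCoupling_mul_sndMatrix (r : V → (V → Bool) → ℝ) :
    flipCoupling r * sndMatrix (V → Bool) (V → Bool) =
      sndMatrix (V → Bool) (V → Bool) * flipGen r := by
  refine Matrix.ext fun p τ => ?_
  rw [flipCoupling_mul_apply, sndMatrix_mul_apply, flipGen_apply]
  refine sum_congr rfl fun x _ => ?_
  simp only [sndMatrix]
  ring

theorem flipCoupling_mul_disagreement_apply (r : V → (V → Bool) → ℝ)
    (p : (V → Bool) × (V → Bool)) (x : V) :
    (flipCoupling r * disagreement V : Matrix _ V ℝ) p x =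
      if p.1 x = p.2 x then |r x p.1 - r x p.2| else -(r x p.1 + r x p.2) := by
  rw [flipCoupling_mul_apply, sum_eq_single x]
  · simp only [disagreement, flipAt_apply_self, syncRate]
    by_cases h : p.1 x = p.2 x
    · simp only [h, ↓reduceIte, sub_self, mul_zero, Bool.not_eq_eq_eq_not, Bool.eq_not_self,
        sub_zero, mul_one, zero_add]
      rcases le_total (r x p.1) (r x p.2) with hle | hle
      · rw [min_eq_left hle, abs_of_nonpos (sub_nonpos.2 hle)]; ring
      · rw [min_eq_right hle, abs_of_nonneg (sub_nonneg.2 hle)]; ring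
    · have h' : p.2 x = !p.1 x := by cases h₁ : p.1 x <;> cases h₂ : p.2 x <;> simp_all
      simp only [h', Bool.eq_not_self, ↓reduceIte, Bool.not_not, Bool.not_eq_eq_eq_not, sub_self,
        mul_zero, sub_zero, zero_sub, mul_neg, mul_one, zero_add]
      ring
  · intro y _ hyx
    simp [disagreement, flipAt_apply_of_ne _ (Ne.symm hyx)]
  · simp

end SpinFlips

section NoisyVoter

variable {V : Type*} [Fintype V] {G : SimpleGraph V} [DecidableRel G.Adj] {δ : ℝ}

theorem nvRate_nonneg (hδ : 0 ≤ δ) (x : V) (σ : V → Bool) : 0 ≤ nvRate G δ x σ := by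
  unfold nvRate; positivity

theorem nvRate_eq (x : V) (σ : V → Bool) :
    nvRate G δ x σ = (2 * δ + 1)⁻¹ * ((G.degree x : ℝ)⁻¹ *
      ∑ y ∈ G.neighborFinset x, (if σ y = σ x then 0 else 1) + δ) := by
  simp [nvRate, natCast_card_filter, SimpleGraph.neighborFinset_eq_filter, sum_filter, ite_and]

variable [DecidableEq V]

theorem nvQ_eq_flipGen : nvQ G δ = flipGen (nvRate G δ) := by
  ext σ τ
  simp only [flipGen, Matrix.sum_apply, jumpGen, nvQ]
  by_cases hστ : σ = τ
  · subst hστ; simp [flipAt_ne]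
  simp only [hστ, if_false, sub_zero, mul_ite, mul_one, mul_zero, flipAt_eq_iff]
  by_cases hcard : (univ.filter fun v => σ v ≠ τ v).card = 1
  · obtain ⟨x₀, hx₀⟩ := card_eq_one.mp hcard
    simp [hx₀]
  · rw [if_neg hcard]
    refine (Finset.sum_eq_zero fun x _ => ?_).symm
    rw [if_neg fun h => hcard (by rw [h, card_singleton])]

variable (G δ) in
/-- `(2δ + 1)⁻¹ • Lᵀ - (2δ / (2δ + 1)) • 1`, where `L` is the generator of simple random walk on
`G`: the transposed walk, slowed down by `2δ + 1` and killed at rate `2δ / (2δ + 1)`. -/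
noncomputable def killedWalkGen : Matrix V V ℝ :=
  G.adjMatrix ℝ * diagonal (fun x => ((2 * δ + 1) * G.degree x)⁻¹) - 1

theorem killedWalkGen_apply_nonneg (hδ : 0 ≤ δ) (y x : V) (hyx : y ≠ x) :
    0 ≤ killedWalkGen G δ y x := by
  rw [killedWalkGen, Matrix.sub_apply, one_apply_ne hyx, sub_zero, mul_diagonal]
  exact mul_nonneg (by rw [SimpleGraph.adjMatrix_apply]; split_ifs <;> norm_num) (by positivity)

theorem vecMul_one_killedWalkGen (hδ : 0 ≤ δ) (hdeg : ∀ v, 1 ≤ G.degree v) :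
    1 ᵥ* killedWalkGen G δ = (-(2 * δ / (2 * δ + 1))) • 1 := by
  ext x
  have hd : (G.degree x : ℝ) ≠ 0 := by have := hdeg x; positivity
  have : 2 * δ + 1 ≠ 0 := by positivity
  simp [killedWalkGen, vecMul_sub, vecMul_diagonal, ← vecMul_vecMul]
  field_simp
  ring

theorem disagreement_mul_killedWalkGen_apply (p : (V → Bool) × (V → Bool)) (x : V) :
    (disagreement V * killedWalkGen G δ) p x =
      (∑ y ∈ G.neighborFinset x, disagreement V p y) * ((2 * δ + 1) * G.degree x)⁻¹
        - disagreement V p x := by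
  rw [killedWalkGen, Matrix.mul_sub, Matrix.mul_one, ← Matrix.mul_assoc, Matrix.sub_apply,
    mul_diagonal]
  congr 2
  simp [Matrix.mul_apply, SimpleGraph.neighborFinset_eq_filter, sum_filter, SimpleGraph.adj_comm]

theorem flipCoupling_nvRate_mul_disagreement_apply_le (hδ : 0 ≤ δ) (hdeg : ∀ v, 1 ≤ G.degree v)
    (p : (V → Bool) × (V → Bool)) (x : V) :
    (flipCoupling (nvRate G δ) * disagreement V : Matrix _ V ℝ) p x ≤
      (disagreement V * killedWalkGen G δ) p x := by
  obtain ⟨σ, τ⟩ := p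
  rw [flipCoupling_mul_disagreement_apply, disagreement_mul_killedWalkGen_apply, nvRate_eq,
    nvRate_eq]
  simp only [disagreement]
  have hd : (G.degree x : ℝ) ≠ 0 := by have := hdeg x; positivity
  have hw : 0 ≤ ((2 * δ + 1) * G.degree x)⁻¹ := by positivity
  set w := ((2 * δ + 1) * G.degree x)⁻¹
  have hrate (k : ℝ) :
      (2 * δ + 1)⁻¹ * ((G.degree x : ℝ)⁻¹ * k + δ) = w * k + δ * (2 * δ + 1)⁻¹ := by
    simp only [w]; field_simp
  rw [hrate, hrate]
  set kσ := ∑ y ∈ G.neighborFinset x, if σ y = σ x then (0 : ℝ) else 1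
  set kτ := ∑ y ∈ G.neighborFinset x, if τ y = τ x then (0 : ℝ) else 1
  set k := ∑ y ∈ G.neighborFinset x, if σ y = τ y then (0 : ℝ) else 1
  split_ifs with h
  · have hcount : |kσ - kτ| ≤ k := abs_sub_sum_ne_le_sum_ne _ h
    calc |w * kσ + δ * (2 * δ + 1)⁻¹ - (w * kτ + δ * (2 * δ + 1)⁻¹)| = |w * (kσ - kτ)| := by
          ring_nf
      _ = w * |kσ - kτ| := by rw [abs_mul, abs_of_nonneg hw]
      _ ≤ k * w - 0 := by linarith [mul_le_mul_of_nonneg_left hcount hw]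
  · have hcount : (G.degree x : ℝ) ≤ kσ + kτ + k := by
      rw [← G.card_neighborFinset_eq_degree]; exact card_le_sum_ne_add_sum_ne_add_sum_ne _ h
    have hwd : w * G.degree x = (2 * δ + 1)⁻¹ := by simp only [w]; field_simp
    have hone : (1 : ℝ) = 2 * δ * (2 * δ + 1)⁻¹ + (2 * δ + 1)⁻¹ := by field_simp
    linarith [mul_le_mul_of_nonneg_left hcount hw]

end NoisyVoter

/-- Convergence to equilibrium for the noisy voter model: for every stationary distribution `μ`
(`μ·Q = 0`), every initial configuration `η` and every `t ≥ 0`,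
`‖P_t(η,·) − μ‖ ≤ n·exp(−(2δ/(2δ+1))·t)`. -/
theorem noisy_voter_convergence_to_stationarity
    {V : Type*} [Fintype V] [DecidableEq V] (δ : ℝ) (hδ : 0 < δ)
    (G : SimpleGraph V) [DecidableRel G.Adj] (hdeg : ∀ v, 1 ≤ G.degree v)
    (μ : (V → Bool) → ℝ) (hμ0 : ∀ σ, 0 ≤ μ σ) (hμ1 : ∑ σ, μ σ = 1)
    (hstat : Matrix.vecMul μ (nvQ G δ) = 0)
    (η : V → Bool) (t : ℝ) (ht : 0 ≤ t) :
    tvDist (fun σ => NormedSpace.exp (t • nvQ G δ) η σ) μ ≤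
      (Fintype.card V : ℝ) * Real.exp (-(2 * δ / (2 * δ + 1)) * t) := by
  rw [nvQ_eq_flipGen] at hstat ⊢
  have hμ : μ ᵥ* NormedSpace.exp (t • flipGen (nvRate G δ)) = μ := by
    simpa using vecMul_exp_of_vecMul_eq_smul (c := 0)
      (by rw [vecMul_smul, hstat, smul_zero, zero_smul])
  set ν : (V → Bool) → ℝ := Pi.single η 1
  have hν : 0 ≤ ν := Pi.single_nonneg.2 zero_le_one
  have hcoupling := tvDist_vecMul_exp_smul_le_of_coupling
    (flipCoupling_apply_nonneg (nvRate_nonneg hδ.le)) (killedWalkGen_apply_nonneg hδ.le)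
    (flipCoupling_mul_fstMatrix _) (flipCoupling_mul_sndMatrix _)
    ite_le_sum_disagreement disagreement_le_one
    (flipCoupling_nvRate_mul_disagreement_apply_le hδ.le hdeg) (vecMul_one_killedWalkGen hδ.le hdeg)
    (π := fun p => ν p.1 * μ p.2) (fun p => mul_nonneg (hν p.1) (hμ0 p.2))
    (by rw [Fintype.sum_prod_type, ← Fintype.sum_mul_sum, hμ1, Fintype.sum_pi_single', one_mul]) ht
  rwa [prod_vecMul_fstMatrix, prod_vecMul_sndMatrix, hμ1, Fintype.sum_pi_single', one_smul,
    one_smul, single_one_vecMul, hμ] at hcoupling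
end

section
/- The two-parameter noisy voter model also has optimal temporal mixing: for all δ > 0 and β > 0, the spin system on any finite graph G with n vertices whose flip rates are c(x,η) = (1/(δ+β+1))·[(1/d(x))·#{y : y ~ x, η(y) ≠ η(x)} + δ·1{η(x)=0} + β·1{η(x)=1}] satisfies, for every pair of initial configurations η, ξ ∈ {0,1}^{V(G)} and every t ≥ 0, ‖P_t(η,·) − P_t(ξ,·)‖ ≤ n·exp(−((δ+β)/(δ+β+1))·t), where P_t = exp(tQ) and Q is the associated rate matrix. -/
/-!
Realise the dynamics by a graphical construction: at every site `x`, independent clocks set the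
spin to `1` (rate `δ/(δ+β+1)`) or to `0` (rate `β/(δ+β+1)`), or copy a uniformly chosen neighbour
(total rate `1/(δ+β+1)`). Running two copies with the same clocks couples `P_t(η,·)` and
`P_t(ξ,·)`, so their total variation distance is at most the expected number of sites where the
copies disagree. Noise at `x` erases a disagreement there and copying only moves disagreements
around, so the disagreement probabilities evolve under a matrix whose columns all sum to
`-(δ+β)/(δ+β+1)`; this bounds the expected number of disagreements by
`n·exp(-(δ+β)t/(δ+β+1))`. On the level of matrices each step is an intertwining relation
`A * X = X * B`, which passes to `exp A * X = X * exp B`.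
-/

open Finset

/-- Flip rate of the two-parameter noisy voter model at vertex `x` in configuration `η`:
`c(x,η) = (1/(δ+β+1))·[(1/d(x))·#{y ~ x : η(y) ≠ η(x)} + δ·1{η(x)=0} + β·1{η(x)=1}]`. -/
noncomputable def nv2Rate {V : Type*} [Fintype V] (G : SimpleGraph V) [DecidableRel G.Adj]
    (δ β : ℝ) (x : V) (η : V → Bool) : ℝ :=
  (1 / (δ + β + 1)) *
    ((1 / (G.degree x : ℝ)) * ((Finset.univ.filter fun y => G.Adj x y ∧ η y ≠ η x).card : ℝ)
      + δ * (if η x = false then 1 else 0) + β * (if η x = true then 1 else 0))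

/-- The rate matrix of the two-parameter noisy voter model. -/
noncomputable def nv2Q {V : Type*} [Fintype V] [DecidableEq V] (G : SimpleGraph V)
    [DecidableRel G.Adj] (δ β : ℝ) : Matrix (V → Bool) (V → Bool) ℝ := fun η η' =>
  if η = η' then -∑ x, nv2Rate G δ β x η
  else if (Finset.univ.filter fun v => η v ≠ η' v).card = 1 then
    ∑ x ∈ Finset.univ.filter (fun v => η v ≠ η' v), nv2Rate G δ β x η
  else 0

open Nat NormedSpace

namespace Matrix

variable {m p : Type*} [Fintype m] [DecidableEq m] [Fintype p] [DecidableEq p]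

theorem summable_expSeries (M : Matrix m m ℝ) : Summable fun k : ℕ => (k !⁻¹ : ℝ) • M ^ k := by
  let _ : SeminormedRing (Matrix m m ℝ) := Matrix.linftyOpSemiNormedRing
  let _ : NormedRing (Matrix m m ℝ) := Matrix.linftyOpNormedRing
  let _ : NormedAlgebra ℝ (Matrix m m ℝ) := Matrix.linftyOpNormedAlgebra
  exact expSeries_summable' M

theorem map_exp_eq_tsum {W : Type*} [AddCommGroup W] [Module ℝ W] [TopologicalSpace W]
    [IsTopologicalAddGroup W] [ContinuousSMul ℝ W] [T2Space W] (L : Matrix m m ℝ →ₗ[ℝ] W)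
    (M : Matrix m m ℝ) : L (exp M) = ∑' k : ℕ, (k !⁻¹ : ℝ) • L (M ^ k) := by
  have hL := (L.toContinuousLinearMap).map_tsum (summable_expSeries M)
  simpa [exp_eq_tsum ℝ] using hL

theorem exp_mul_eq_mul_exp {A : Matrix m m ℝ} {B : Matrix p p ℝ} {X : Matrix m p ℝ}
    (h : A * X = X * B) : exp A * X = X * exp B := by
  have hpow : ∀ k : ℕ, A ^ k * X = X * B ^ k := by
    intro k
    induction k with
    | zero => simp
    | succ k ih => rw [pow_succ, pow_succ, Matrix.mul_assoc, h, ← Matrix.mul_assoc, ih,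
        Matrix.mul_assoc]
  have hA := map_exp_eq_tsum (mulRightLinearMap m ℝ X) A
  have hB := map_exp_eq_tsum (mulLeftLinearMap p ℝ X) B
  simp only [mulRightLinearMap_apply, mulLeftLinearMap_apply, hpow] at hA hB
  rw [hA, hB]

theorem exp_smul_one (c : ℝ) : exp (c • (1 : Matrix m m ℝ)) = Real.exp c • 1 := by
  rw [smul_one_eq_diagonal, exp_diagonal, Pi.exp_def, ← Real.exp_eq_exp_ℝ, ← smul_one_eq_diagonal]

theorem exp_apply_nonneg_of_nonneg_s16 {M : Matrix m m ℝ} (h : ∀ i j, 0 ≤ M i j) (i j : m) :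
    0 ≤ exp M i j := by
  have hpow : ∀ (k : ℕ) i j, 0 ≤ (M ^ k) i j := by
    intro k
    induction k with
    | zero => intro i j; rw [pow_zero, one_apply]; positivity
    | succ k ih =>
      intro i j
      rw [pow_succ, mul_apply]
      exact sum_nonneg fun l _ => mul_nonneg (ih i l) (h l j)
  have hentry := map_exp_eq_tsum (entryLinearMap ℝ ℝ i j) M
  simp only [entryLinearMap_apply] at hentry
  rw [hentry]
  exact tsum_nonneg fun k => smul_nonneg (by positivity) (hpow k i j)

theorem exp_apply_nonneg {M : Matrix m m ℝ} (h : ∀ i j, i ≠ j → 0 ≤ M i j) (i j : m) :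
    0 ≤ exp M i j := by
  set c := ∑ k, |M k k|
  have hshift : ∀ i j, 0 ≤ (M + c • 1) i j := by
    intro i j
    rcases eq_or_ne i j with rfl | hij
    · have : |M i i| ≤ c :=
        single_le_sum (f := fun k => |M k k|) (fun _ _ => abs_nonneg _) (mem_univ i)
      simp only [add_apply, smul_apply, one_apply_eq, smul_eq_mul, mul_one]
      linarith [neg_abs_le (M i i)]
    · simpa [one_apply_ne hij] using h i j hij
  have hM : M = (M + c • 1) + (-c) • 1 := by rw [add_assoc, ← add_smul]; simp
  rw [hM, exp_add_of_commute _ _ ((Commute.one_right _).smul_right _), exp_smul_one,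
    Matrix.mul_smul, Matrix.mul_one, smul_apply, smul_eq_mul]
  exact mul_nonneg (Real.exp_nonneg _) (exp_apply_nonneg_of_nonneg_s16 hshift i j)

theorem sum_exp_apply_of_sum_apply_eq {M : Matrix m m ℝ} {c : ℝ} (h : ∀ j, ∑ i, M i j = c)
    (j : m) : ∑ i, exp M i j = Real.exp c := by
  let X : Matrix Unit m ℝ := of fun _ _ => 1
  have hX : (c • 1 : Matrix Unit Unit ℝ) * X = X * M := by
    ext u j; simp [X, mul_apply, h]
  have := congrFun (congrFun (exp_mul_eq_mul_exp hX) ()) j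
  simpa [X, exp_smul_one, mul_apply] using this.symm

end Matrix

section MoveGenerator

variable {ι S T : Type*} [Fintype ι] [DecidableEq S] [DecidableEq T]

def moveGenerator (move : ι → S → S) (rate : ι → ℝ) : Matrix S S ℝ := fun s s' =>
  ∑ i, rate i * ((if move i s = s' then 1 else 0) - if s = s' then 1 else 0)

variable {move : ι → S → S} {rate : ι → ℝ}

theorem moveGenerator_apply_nonneg (hrate : ∀ i, 0 ≤ rate i) {s s' : S} (h : s ≠ s') :
    0 ≤ moveGenerator move rate s s' := by
  refine sum_nonneg fun i _ => mul_nonneg (hrate i) ?_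
  rw [if_neg h, sub_zero]
  positivity

variable [Fintype S] [Fintype T]

theorem moveGenerator_mul_apply {κ : Type*} (F : Matrix S κ ℝ) (s : S) (k : κ) :
    (moveGenerator move rate * F) s k = ∑ i, rate i * (F (move i s) k - F s k) := by
  simp only [Matrix.mul_apply, moveGenerator, sum_mul]
  rw [sum_comm]
  refine sum_congr rfl fun i _ => ?_
  simp only [mul_assoc, ← mul_sum, sub_mul, sum_sub_distrib, ite_mul, one_mul, zero_mul,
    Fintype.sum_ite_eq]

theorem exp_smul_moveGenerator_apply_nonneg (hrate : ∀ i, 0 ≤ rate i) {t : ℝ} (ht : 0 ≤ t)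
    (s s' : S) : 0 ≤ exp (t • moveGenerator move rate) s s' :=
  Matrix.exp_apply_nonneg (fun _ _ h => mul_nonneg ht (moveGenerator_apply_nonneg hrate h)) s s'

theorem moveGenerator_mul_submatrix_one {moveT : ι → T → T} {f : S → T}
    (hf : ∀ i s, f (move i s) = moveT i (f s)) :
    moveGenerator move rate * (1 : Matrix T T ℝ).submatrix f id =
      (1 : Matrix T T ℝ).submatrix f id * moveGenerator moveT rate := by
  ext s u
  rw [moveGenerator_mul_apply, Matrix.mul_apply]
  simp [Matrix.one_apply, hf, moveGenerator]

theorem exp_smul_moveGenerator_apply_of_semiconj {moveT : ι → T → T} {f : S → T}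
    (hf : ∀ i s, f (move i s) = moveT i (f s)) (t : ℝ) (s : S) (u : T) :
    exp (t • moveGenerator moveT rate) (f s) u =
      ∑ s', exp (t • moveGenerator move rate) s s' * if f s' = u then 1 else 0 := by
  have hX : t • moveGenerator move rate * (1 : Matrix T T ℝ).submatrix f id =
      (1 : Matrix T T ℝ).submatrix f id * t • moveGenerator moveT rate := by
    rw [Matrix.smul_mul, moveGenerator_mul_submatrix_one hf, Matrix.mul_smul]
  have := congrFun (congrFun (Matrix.exp_mul_eq_mul_exp hX) s) u
  simpa [Matrix.mul_apply, Matrix.one_apply] using this.symm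

end MoveGenerator

theorem tvDist_le_of_coupling {S : Type*} [Fintype S] [DecidableEq S] {μ ν : S → ℝ}
    {w : S × S → ℝ} (hw : ∀ q, 0 ≤ w q) (hμ : ∀ s, μ s = ∑ q, w q * if q.1 = s then 1 else 0)
    (hν : ∀ s, ν s = ∑ q, w q * if q.2 = s then 1 else 0) :
    tvDist μ ν ≤ ∑ q, w q * if q.1 = q.2 then 0 else 1 := by
  have hmass : ∀ (A : Finset S) (π : S × S → S), (∑ s ∈ A, ∑ q, w q * if π q = s then 1 else 0)
      = ∑ q, w q * if π q ∈ A then 1 else 0 := by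
    intro A π
    rw [sum_comm]
    simp only [← mul_sum, sum_ite_eq]
  refine sup'_le _ _ fun A _ => ?_
  simp only [hμ, hν, hmass, ← sum_sub_distrib, ← mul_sub]
  refine (abs_sum_le_sum_abs _ _).trans (sum_le_sum fun q _ => ?_)
  rw [abs_mul, abs_of_nonneg (hw q)]
  refine mul_le_mul_of_nonneg_left ?_ (hw q)
  split_ifs <;> simp_all

section Voter

variable {V : Type*}

variable (V) in
def disagreementIndicator : Matrix ((V → Bool) × (V → Bool)) V ℝ := fun q x =>
  if q.1 x ≠ q.2 x then 1 else 0

theorem sum_disagreementIndicator [Fintype V] (q : (V → Bool) × (V → Bool)) :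
    ∑ x, disagreementIndicator V q x = hammingDist q.1 q.2 := by
  simp only [disagreementIndicator]
  rw [sum_boole]
  rfl

variable [DecidableEq V]

/-- `(x, inl b)` sets the spin at `x` to `b`, and `(x, inr y)` copies the spin at `y` to `x`. -/
def voterMove (i : V × (Bool ⊕ V)) (η : V → Bool) : V → Bool :=
  Function.update η i.1 (i.2.elim id η)

theorem disagreementIndicator_map_voterMove (q : (V → Bool) × (V → Bool))
    (i : V × (Bool ⊕ V)) (x : V) :
    disagreementIndicator V (Prod.map (voterMove i) (voterMove i) q) x =
      if i.1 = x then i.2.elim (fun _ => 0) (disagreementIndicator V q)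
      else disagreementIndicator V q x := by
  obtain ⟨v, e⟩ := i
  rcases eq_or_ne v x with rfl | hvx
  · cases e <;> simp [disagreementIndicator, voterMove]
  · simp [disagreementIndicator, voterMove, Function.update_of_ne hvx.symm, hvx]

variable [Fintype V]

/-- Noise at `x` erases a disagreement at `x`; `x` copying `y` replaces it by the disagreement
at `y`. -/
def disagreementGenerator (r : V × (Bool ⊕ V) → ℝ) : Matrix V V ℝ := fun y x =>
  r (x, .inr y) - if x = y then ∑ e, r (x, e) else 0

theorem moveGenerator_mul_disagreementIndicator (r : V × (Bool ⊕ V) → ℝ) :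
    moveGenerator (fun i => Prod.map (voterMove i) (voterMove i)) r * disagreementIndicator V =
      disagreementIndicator V * disagreementGenerator r := by
  ext q x
  rw [moveGenerator_mul_apply, Matrix.mul_apply, Fintype.sum_prod_type]
  simp only [disagreementIndicator_map_voterMove]
  rw [sum_eq_single x (fun v _ hvx => by simp [hvx]) (by simp)]
  simp only [if_true, disagreementGenerator, Fintype.sum_sum_type, Sum.elim_inl, Sum.elim_inr,
    mul_sub, sum_sub_distrib, mul_ite, mul_zero, Fintype.sum_ite_eq]
  simp only [sum_const_zero, zero_add, ← sum_mul, mul_comm (disagreementIndicator V q _)]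
  ring

theorem sum_disagreementGenerator_apply (r : V × (Bool ⊕ V) → ℝ) (x : V) :
    ∑ y, disagreementGenerator r y x = -∑ b, r (x, .inl b) := by
  simp [disagreementGenerator, sum_sub_distrib, Fintype.sum_sum_type]

end Voter

section VoterMixing

variable {V : Type*} [Fintype V] [DecidableEq V] {r : V × (Bool ⊕ V) → ℝ} {κ t : ℝ}

theorem sum_exp_mul_hammingDist_le (hr : ∀ i, 0 ≤ r i) (hκ : ∀ x, ∑ b, r (x, .inl b) = κ)
    (ht : 0 ≤ t) (p : (V → Bool) × (V → Bool)) :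
    ∑ q, exp (t • moveGenerator (fun i => Prod.map (voterMove i) (voterMove i)) r) p q *
        hammingDist q.1 q.2 ≤ Fintype.card V * Real.exp (-κ * t) := by
  set P := exp (t • moveGenerator (fun i => Prod.map (voterMove i) (voterMove i)) r)
  set E := exp (t • disagreementGenerator r)
  have hPE : P * disagreementIndicator V = disagreementIndicator V * E :=
    Matrix.exp_mul_eq_mul_exp (by
      rw [Matrix.smul_mul, moveGenerator_mul_disagreementIndicator, Matrix.mul_smul])
  have hE : ∀ y x, 0 ≤ E y x := Matrix.exp_apply_nonneg fun y x hyx =>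
    mul_nonneg ht (by simpa [disagreementGenerator, hyx.symm] using hr _)
  have hEsum : ∀ x, ∑ y, E y x = Real.exp (-κ * t) :=
    Matrix.sum_exp_apply_of_sum_apply_eq fun x => by
      simp only [Matrix.smul_apply, smul_eq_mul, ← mul_sum, sum_disagreementGenerator_apply, hκ]
      ring
  calc ∑ q, P p q * hammingDist q.1 q.2 = ∑ x, (P * disagreementIndicator V) p x := by
        simp only [← sum_disagreementIndicator, mul_sum, Matrix.mul_apply]
        exact sum_comm
    _ = ∑ x, ∑ y, disagreementIndicator V p y * E y x := by
        rw [hPE]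
        simp only [Matrix.mul_apply]
    _ ≤ ∑ x, ∑ y, E y x := by
        gcongr with x _ y _
        refine mul_le_of_le_one_left (hE y x) ?_
        unfold disagreementIndicator
        split_ifs <;> norm_num
    _ = Fintype.card V * Real.exp (-κ * t) := by simp [hEsum]

theorem tvDist_exp_moveGenerator_voterMove_le (hr : ∀ i, 0 ≤ r i)
    (hκ : ∀ x, ∑ b, r (x, .inl b) = κ) (ht : 0 ≤ t) (η ξ : V → Bool) :
    tvDist (fun σ => exp (t • moveGenerator voterMove r) η σ)
        (fun σ => exp (t • moveGenerator voterMove r) ξ σ) ≤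
      Fintype.card V * Real.exp (-κ * t) := by
  set P := exp (t • moveGenerator (fun i => Prod.map (voterMove i) (voterMove i)) r)
  have hP : ∀ q, 0 ≤ P (η, ξ) q := exp_smul_moveGenerator_apply_nonneg hr ht _
  calc _ ≤ ∑ q, P (η, ξ) q * if q.1 = q.2 then 0 else 1 :=
        tvDist_le_of_coupling hP
          (exp_smul_moveGenerator_apply_of_semiconj (f := Prod.fst) (fun _ _ => rfl) t (η, ξ))
          (exp_smul_moveGenerator_apply_of_semiconj (f := Prod.snd) (fun _ _ => rfl) t (η, ξ))
    _ ≤ ∑ q, P (η, ξ) q * hammingDist q.1 q.2 := by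
        refine sum_le_sum fun q _ => mul_le_mul_of_nonneg_left ?_ (hP q)
        split_ifs with h
        · positivity
        · exact_mod_cast hammingDist_pos.2 h
    _ ≤ _ := sum_exp_mul_hammingDist_le hr hκ ht _

end VoterMixing

section SpinFlip

variable {V : Type*} [Fintype V] [DecidableEq V]

theorem update_not_eq_iff_filter_ne_eq_singleton {η η' : V → Bool} {x : V} :
    Function.update η x (!η x) = η' ↔ univ.filter (fun v => η v ≠ η' v) = {x} := by
  constructor
  · rintro rfl
    ext v
    rcases eq_or_ne v x with rfl | hvx <;> simp [*]
  · intro h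
    funext v
    have hv : η v ≠ η' v ↔ v = x := by simpa using congrArg (v ∈ ·) h
    rcases eq_or_ne v x with rfl | hvx
    · simpa using Bool.eq_not_of_ne (hv.2 rfl)
    · simpa [hvx] using hv

theorem sum_mul_ite_update_not_eq (c : V → ℝ) (η η' : V → Bool) :
    ∑ x, c x * (if Function.update η x (!η x) = η' then 1 else 0) =
      if (univ.filter fun v => η v ≠ η' v).card = 1 then
        ∑ x ∈ univ.filter (fun v => η v ≠ η' v), c x
      else 0 := by
  simp only [update_not_eq_iff_filter_ne_eq_singleton, mul_ite, mul_one, mul_zero]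
  split_ifs with h
  · obtain ⟨x, hx⟩ := card_eq_one.1 h
    simp [hx]
  · exact sum_eq_zero fun x _ => if_neg fun hx => h (by rw [hx, card_singleton])

theorem nv2Q_apply (G : SimpleGraph V) [DecidableRel G.Adj] (δ β : ℝ) (η η' : V → Bool) :
    nv2Q G δ β η η' = ∑ x, nv2Rate G δ β x η *
      ((if Function.update η x (!η x) = η' then 1 else 0) - if η = η' then 1 else 0) := by
  simp only [mul_sub, sum_sub_distrib, sum_mul_ite_update_not_eq, ← sum_mul]
  by_cases h : η = η'
  · subst h
    simp [nv2Q]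
  · simp [nv2Q, h]

theorem ite_update_eq_sub_ite_eq (η η' : V → Bool) (x : V) (b : Bool) :
    (if Function.update η x b = η' then (1 : ℝ) else 0) - (if η = η' then 1 else 0) =
      (if b = η x then 0 else 1) *
        ((if Function.update η x (!η x) = η' then 1 else 0) - if η = η' then 1 else 0) := by
  rcases Bool.eq_or_eq_not b (η x) with rfl | rfl <;> simp

theorem moveGenerator_voterMove_apply (r : V × (Bool ⊕ V) → ℝ) (η η' : V → Bool) :
    moveGenerator voterMove r η η' = ∑ x, (∑ e, r (x, e) * if e.elim id η = η x then 0 else 1) *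
      ((if Function.update η x (!η x) = η' then 1 else 0) - if η = η' then 1 else 0) := by
  simp only [moveGenerator, Fintype.sum_prod_type, sum_mul, mul_assoc]
  refine sum_congr rfl fun x _ => sum_congr rfl fun e _ => ?_
  exact congrArg _ (ite_update_eq_sub_ite_eq η η' x (e.elim id η))

end SpinFlip

section NoisyVoter

variable {V : Type*} [Fintype V] (G : SimpleGraph V) [DecidableRel G.Adj] (δ β : ℝ)

noncomputable def nv2MoveRate : V × (Bool ⊕ V) → ℝ
  | (_, .inl true) => δ / (δ + β + 1)
  | (_, .inl false) => β / (δ + β + 1)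
  | (x, .inr y) => if G.Adj x y then 1 / ((δ + β + 1) * G.degree x) else 0

theorem nv2Rate_eq_sum_nv2MoveRate (x : V) (η : V → Bool) :
    nv2Rate G δ β x η = ∑ e, nv2MoveRate G δ β (x, e) * if e.elim id η = η x then 0 else 1 := by
  have hcopy : ∑ y, nv2MoveRate G δ β (x, .inr y) * (if (Sum.inr y).elim id η = η x then 0 else 1) =
      1 / (δ + β + 1) * (1 / G.degree x *
        (univ.filter fun y => G.Adj x y ∧ η y ≠ η x).card) := by
    rw [card_filter, Nat.cast_sum, mul_sum, mul_sum]
    refine sum_congr rfl fun y _ => ?_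
    by_cases hxy : G.Adj x y <;> by_cases hy : η y = η x <;> simp [nv2MoveRate, hxy, hy, mul_comm]
  rw [Fintype.sum_sum_type, hcopy, Fintype.sum_bool, nv2Rate]
  cases η x <;> simp [nv2MoveRate] <;> ring

theorem nv2MoveRate_nonneg (hδ : 0 ≤ δ) (hβ : 0 ≤ β) (i : V × (Bool ⊕ V)) :
    0 ≤ nv2MoveRate G δ β i := by
  match i with
  | (_, .inl true) | (_, .inl false) => simp only [nv2MoveRate]; positivity
  | (x, .inr y) => simp only [nv2MoveRate]; split_ifs <;> positivity

theorem sum_nv2MoveRate_inl (x : V) :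
    ∑ b, nv2MoveRate G δ β (x, .inl b) = (δ + β) / (δ + β + 1) := by
  simp [nv2MoveRate, add_div]

variable [DecidableEq V]

theorem nv2Q_eq_moveGenerator : nv2Q G δ β = moveGenerator voterMove (nv2MoveRate G δ β) := by
  ext η η'
  rw [nv2Q_apply, moveGenerator_voterMove_apply]
  simp only [nv2Rate_eq_sum_nv2MoveRate]

end NoisyVoter

theorem two_parameter_noisy_voter_optimal_temporal_mixing_general
    {V : Type*} [Fintype V] [DecidableEq V] (δ β : ℝ) (hδ : 0 < δ) (hβ : 0 < β)
    (G : SimpleGraph V) [DecidableRel G.Adj]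
    (η ξ : V → Bool) (t : ℝ) (ht : 0 ≤ t) :
    tvDist (fun σ => NormedSpace.exp (t • nv2Q G δ β) η σ)
        (fun σ => NormedSpace.exp (t • nv2Q G δ β) ξ σ) ≤
      (Fintype.card V : ℝ) * Real.exp (-((δ + β) / (δ + β + 1)) * t) := by
  rw [nv2Q_eq_moveGenerator]
  exact tvDist_exp_moveGenerator_voterMove_le (nv2MoveRate_nonneg G δ β hδ.le hβ.le)
    (sum_nv2MoveRate_inl G δ β) ht η ξ

/-- Optimal temporal mixing for the two-parameter noisy voter model: on any finite graph with
`n` vertices, for any two initial configurations `η, ξ` and every `t ≥ 0`,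
`‖P_t(η,·) − P_t(ξ,·)‖ ≤ n·exp(−((δ+β)/(δ+β+1))·t)`. -/
theorem two_parameter_noisy_voter_optimal_temporal_mixing
    {V : Type*} [Fintype V] [DecidableEq V] (δ β : ℝ) (hδ : 0 < δ) (hβ : 0 < β)
    (G : SimpleGraph V) [DecidableRel G.Adj] (hdeg : ∀ v, 1 ≤ G.degree v)
    (η ξ : V → Bool) (t : ℝ) (ht : 0 ≤ t) :
    tvDist (fun σ => NormedSpace.exp (t • nv2Q G δ β) η σ)
        (fun σ => NormedSpace.exp (t • nv2Q G δ β) ξ σ) ≤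
      (Fintype.card V : ℝ) * Real.exp (-((δ + β) / (δ + β + 1)) * t) :=
  two_parameter_noisy_voter_optimal_temporal_mixing_general δ β hδ hβ G η ξ t ht
end
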